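/- Lemma S8: for all states x and z of the graph with x ≥ z (componentwise), ∑_{j∈V} |n(j,x) − n(j,z)| ≤ k·‖x − z‖₁. -/
import Mathlib


open Real

/-- View a Boolean infection state as a real number (`true ↦ 1`, `false ↦ 0`). -/
def boolToR (b : Bool) : ℝ := if b then 1 else 0

/-- `n(j,x)`: the number of infected neighbors of `j` if `j` is susceptible, and `0` else. -/
noncomputable def numInfNbrs {V : Type*} (G : SimpleGraph V) (x : V → Bool) (j : V) : ℕ :=
  if x j then 0 else {j' | G.Adj j j' ∧ x j' = true}.ncard

/-- **Lemma S8.** For all states `x ≥ z` (componentwise) of a graph with maximum degree at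
most `k`, `∑_j |n(j,x) - n(j,z)| ≤ k * ‖x - z‖₁`. -/
theorem sum_abs_numInfNbrs_sub_le {V : Type*} [Fintype V] (G : SimpleGraph V) (k : ℕ)
    (hdeg : ∀ j : V, (G.neighborSet j).ncard ≤ k)
    (x z : V → Bool) (hxz : ∀ j, z j ≤ x j) :
    ∑ j : V, |(numInfNbrs G x j : ℝ) - (numInfNbrs G z j : ℝ)| ≤
      (k : ℝ) * ∑ j : V, |boolToR (x j) - boolToR (z j)| := by
  classical
  have hble : ∀ a b : Bool, a ≤ b → a = true → b = true := by decide
  have hble' : ∀ a b : Bool, a ≤ b → b = false → a = false := by decide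
  -- if x j = false then z j = false
  have hzx : ∀ j, x j = false → z j = false := by
    intro j hj
    exact hble' _ _ (hxz j) hj
  set A : V → Finset V := fun j => Finset.univ.filter (fun j' => G.Adj j j' ∧ x j' = true)
    with hA
  set B : V → Finset V := fun j => Finset.univ.filter (fun j' => G.Adj j j' ∧ z j' = true)
    with hB
  set D : Finset V := Finset.univ.filter (fun j => x j = true ∧ z j = false) with hD
  set S : Finset V := Finset.univ.filter (fun j => x j = false) with hS
  have hBA : ∀ j, B j ⊆ A j := by
    intro j j' hj'
    simp only [hA, hB, Finset.mem_filter] at *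
    refine ⟨hj'.1, hj'.2.1, ?_⟩
    exact hble _ _ (hxz j') hj'.2.2
  have hnx : ∀ j, numInfNbrs G x j = if x j then 0 else (A j).card := by
    intro j
    unfold numInfNbrs
    congr 1
    rw [← Set.ncard_coe_finset]
    congr 1
    ext j'; simp [hA]
  have hnz : ∀ j, numInfNbrs G z j = if z j then 0 else (B j).card := by
    intro j
    unfold numInfNbrs
    congr 1
    rw [← Set.ncard_coe_finset]
    congr 1
    ext j'; simp [hB]
  -- per-term computation
  have key : ∀ j, |(numInfNbrs G x j : ℝ) - (numInfNbrs G z j : ℝ)| =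
      (if j ∈ D then ((B j).card : ℝ) else 0) +
      (if j ∈ S then (((A j).card : ℝ) - ((B j).card : ℝ)) else 0) := by
    intro j
    rw [hnx, hnz]
    rcases hj : x j with hjx | hjx
    · have hjz := hzx j hj
      have hBle : ((B j).card : ℝ) ≤ ((A j).card : ℝ) := by
        exact_mod_cast Finset.card_le_card (hBA j)
      simp [hD, hS, hj, hjz, abs_of_nonneg (sub_nonneg.mpr hBle)]
    · rcases hjz : z j with hjz' | hjz'
      · simp [hD, hS, hj, hjz, abs_of_nonpos]
      · simp [hD, hS, hj, hjz]
  rw [Finset.sum_congr rfl (fun j _ => key j), Finset.sum_add_distrib]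
  rw [← Finset.sum_filter, ← Finset.sum_filter]
  have hDf : Finset.univ.filter (· ∈ D) = D := by
    ext j; simp [hD]
  have hSf : Finset.univ.filter (· ∈ S) = S := by
    ext j; simp [hS]
  rw [hDf, hSf]
  -- RHS equals k * D.card
  have hRHS : ∑ j : V, |boolToR (x j) - boolToR (z j)| = (D.card : ℝ) := by
    have : ∀ j : V, |boolToR (x j) - boolToR (z j)| = if j ∈ D then (1:ℝ) else 0 := by
      intro j
      rcases hj : x j with hjx | hjx
      · have hjz := hzx j hj
        simp [hD, boolToR, hj, hjz]
      · rcases hjz : z j with hjz' | hjz'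
        · simp [hD, boolToR, hj, hjz]
        · simp [hD, boolToR, hj, hjz]
    rw [Finset.sum_congr rfl (fun j _ => this j)]
    simp
  rw [hRHS]
  -- rewrite second sum via sdiff and double counting
  have hsd : ∀ j ∈ S, ((A j).card : ℝ) - ((B j).card : ℝ) =
      ∑ j' ∈ D, (if G.Adj j j' then (1:ℝ) else 0) := by
    intro j hj
    have hcard : (A j).card - (B j).card = (A j \ B j).card := (Finset.card_sdiff_of_subset (hBA j)).symm
    have h1 : ((A j).card : ℝ) - ((B j).card : ℝ) = ((A j \ B j).card : ℝ) := by
      rw [← hcard]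
      exact_mod_cast (Nat.cast_sub (Finset.card_le_card (hBA j))).symm
    rw [h1]
    have h2 : A j \ B j = D.filter (fun j' => G.Adj j j') := by
      ext j'
      simp only [hA, hB, hD, Finset.mem_sdiff, Finset.mem_filter, Finset.mem_univ, true_and]
      constructor
      · rintro ⟨⟨hadj, hx⟩, hnb⟩
        refine ⟨⟨hx, ?_⟩, hadj⟩
        by_contra h
        exact hnb ⟨hadj, by simpa using h⟩
      · rintro ⟨⟨hx, hz⟩, hadj⟩
        exact ⟨⟨hadj, hx⟩, fun h => by simp [hz] at h⟩
    rw [h2]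
    rw [Finset.card_filter]
    push_cast
    rfl
  rw [Finset.sum_congr rfl hsd, Finset.sum_comm]
  -- now combine into per-d bound
  have hswap : ∀ d ∈ D, ∑ j ∈ S, (if G.Adj j d then (1:ℝ) else 0) =
      ((S.filter (fun j => G.Adj d j)).card : ℝ) := by
    intro d hd
    rw [Finset.card_filter]
    push_cast
    refine Finset.sum_congr rfl fun j _ => ?_
    simp [G.adj_comm]
  rw [Finset.sum_congr rfl hswap, ← Finset.sum_add_distrib]
  have hbound : ∀ d ∈ D, ((B d).card : ℝ) + ((S.filter (fun j => G.Adj d j)).card : ℝ)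
      ≤ (k : ℝ) := by
    intro d hd
    have hdisj : Disjoint (B d) (S.filter (fun j => G.Adj d j)) := by
      rw [Finset.disjoint_left]
      intro a ha ha'
      simp only [hB, hS, Finset.mem_filter, Finset.mem_univ, true_and] at ha ha'
      exact absurd (hble _ _ (hxz a) ha.2) (by simp [ha'.1])
    have hsub : B d ∪ S.filter (fun j => G.Adj d j) ⊆
        Finset.univ.filter (fun j => G.Adj d j) := by
      intro a ha
      rcases Finset.mem_union.mp ha with ha | ha
      · simp only [hB, Finset.mem_filter, Finset.mem_univ, true_and] at ha ⊢
        exact ha.1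
      · simp only [hS, Finset.mem_filter, Finset.mem_univ, true_and] at ha ⊢
        exact ha.2
    have hcard : (B d).card + (S.filter (fun j => G.Adj d j)).card ≤ k := by
      rw [← Finset.card_union_of_disjoint hdisj]
      refine le_trans (Finset.card_le_card hsub) ?_
      have : (Finset.univ.filter (fun j => G.Adj d j)).card = (G.neighborSet d).ncard := by
        rw [← Set.ncard_coe_finset]
        congr 1
        ext j'; simp [SimpleGraph.neighborSet]
      rw [this]
      exact hdeg d
    exact_mod_cast hcard
  calc ∑ d ∈ D, (((B d).card : ℝ) + ((S.filter (fun j => G.Adj d j)).card : ℝ))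
      ≤ ∑ d ∈ D, (k : ℝ) := Finset.sum_le_sum hbound
    _ = (k : ℝ) * D.card := by rw [Finset.sum_const, nsmul_eq_mul, mul_comm]
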